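/- arXiv:2203.04919 — 4 statements merged into one kernel-verified Lean document; each statement's English description precedes it below -/
import Mathlib

section
/- Let G be a positive C^2 function on [x0, ∞) that is square-integrable and satisfies -h^2 G'' + (V - E)G = 0, where V(x) - E ≥ δη/2 > 0 for all x ≥ x0. Then for all z ≥ x ≥ x0, G(z) ≤ exp(-(√(δη)/(2h))(z - x)) · G(x). -/
open Set MeasureTheory

/-!
With `κ = √(δη) / (2h)` the equation gives `G'' ≥ κ² G ≥ 0`. Since `G'` is nondecreasing, a
positive value of `G'` would make `G` nondecreasing from there on, hence bounded below by a
positive constant, which is incompatible with `G ∈ L²`; so `G' ≤ 0`. Next `F = G' + κ G` satisfies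
`(e^{-κx} F)' = e^{-κx} (G'' - κ² G) ≥ 0`, so a positive value of `F` would persist, and
`κ G ≥ F` would again bound `G` below. Hence `F ≤ 0`, i.e. `e^{κx} G` is nonincreasing.
-/

section ExpWeighted

variable {D : Set ℝ} {f f' : ℝ → ℝ}

theorem monotoneOn_of_forall_hasDerivWithinAt_nonneg (hD : Convex ℝ D)
    (hf : ∀ x ∈ D, HasDerivWithinAt f (f' x) D x) (hf' : ∀ x ∈ D, 0 ≤ f' x) :
    MonotoneOn f D :=
  monotoneOn_of_hasDerivWithinAt_nonneg hD (fun x hx => (hf x hx).continuousWithinAt)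
    (fun x hx => (hf x (interior_subset hx)).mono interior_subset)
    (fun x hx => hf' x (interior_subset hx))

theorem antitoneOn_of_forall_hasDerivWithinAt_nonpos (hD : Convex ℝ D)
    (hf : ∀ x ∈ D, HasDerivWithinAt f (f' x) D x) (hf' : ∀ x ∈ D, f' x ≤ 0) :
    AntitoneOn f D :=
  antitoneOn_of_hasDerivWithinAt_nonpos hD (fun x hx => (hf x hx).continuousWithinAt)
    (fun x hx => (hf x (interior_subset hx)).mono interior_subset)
    (fun x hx => hf' x (interior_subset hx))

theorem HasDerivWithinAt.exp_mul_mul (k : ℝ) {x : ℝ} (hf : HasDerivWithinAt f (f' x) D x) :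
    HasDerivWithinAt (fun x => Real.exp (k * x) * f x)
      (Real.exp (k * x) * (f' x + k * f x)) D x := by
  have he : HasDerivAt (fun x => Real.exp (k * x)) (Real.exp (k * x) * k) x := by
    simpa using ((hasDerivAt_id x).const_mul k).exp
  exact (he.hasDerivWithinAt.mul hf).congr_deriv (by ring)

theorem monotoneOn_exp_mul_mul (hD : Convex ℝ D) (k : ℝ)
    (hf : ∀ x ∈ D, HasDerivWithinAt f (f' x) D x) (hk : ∀ x ∈ D, 0 ≤ f' x + k * f x) :
    MonotoneOn (fun x => Real.exp (k * x) * f x) D :=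
  monotoneOn_of_forall_hasDerivWithinAt_nonneg hD (fun x hx => (hf x hx).exp_mul_mul k)
    fun x hx => mul_nonneg (Real.exp_pos _).le (hk x hx)

theorem antitoneOn_exp_mul_mul (hD : Convex ℝ D) (k : ℝ)
    (hf : ∀ x ∈ D, HasDerivWithinAt f (f' x) D x) (hk : ∀ x ∈ D, f' x + k * f x ≤ 0) :
    AntitoneOn (fun x => Real.exp (k * x) * f x) D :=
  antitoneOn_of_forall_hasDerivWithinAt_nonpos hD (fun x hx => (hf x hx).exp_mul_mul k)
    fun x hx => mul_nonpos_of_nonneg_of_nonpos (Real.exp_pos _).le (hk x hx)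

end ExpWeighted

theorem exists_lt_of_integrableOn_Ici {f : ℝ → ℝ} {a c : ℝ} (hf : IntegrableOn f (Ici a))
    (hc : 0 < c) : ∃ x ∈ Ici a, f x < c := by
  by_contra! hle
  have hconst : Integrable (fun _ : ℝ => c) (volume.restrict (Ici a)) := by
    refine hf.mono' aestronglyMeasurable_const ?_
    filter_upwards [ae_restrict_mem measurableSet_Ici] with x hx
    rw [Real.norm_eq_abs, abs_of_pos hc]
    exact hle x hx
  rcases integrable_const_iff.mp hconst with hc0 | hfin
  · exact hc.ne' hc0
  · rw [isFiniteMeasure_restrict, Real.volume_Ici] at hfin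
    exact hfin rfl

section HalfLine

variable {a κ : ℝ} {G G' G'' : ℝ → ℝ}

theorem deriv_nonpos_of_integrableOn_Ici_sq
    (hG1 : ∀ x ∈ Ici a, HasDerivWithinAt G (G' x) (Ici a) x)
    (hG2 : ∀ x ∈ Ici a, HasDerivWithinAt G' (G'' x) (Ici a) x)
    (hG'' : ∀ x ∈ Ici a, 0 ≤ G'' x) (hGpos : ∀ x ∈ Ici a, 0 < G x)
    (hGint : IntegrableOn (fun x => G x ^ 2) (Ici a)) :
    ∀ x ∈ Ici a, G' x ≤ 0 := by
  intro x₁ hx₁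
  by_contra! hpos
  have hsub : Ici x₁ ⊆ Ici a := Ici_subset_Ici.mpr hx₁
  have hG'mono : MonotoneOn G' (Ici a) :=
    monotoneOn_of_forall_hasDerivWithinAt_nonneg (convex_Ici a) hG2 hG''
  have hGmono : MonotoneOn G (Ici x₁) :=
    monotoneOn_of_forall_hasDerivWithinAt_nonneg (convex_Ici x₁)
      (fun x hx => (hG1 x (hsub hx)).mono hsub)
      (fun x hx => hpos.le.trans (hG'mono hx₁ (hsub hx) hx))
  obtain ⟨x, hx, hlt⟩ :=
    exists_lt_of_integrableOn_Ici (hGint.mono_set hsub) (pow_pos (hGpos x₁ hx₁) 2)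
  have : G x₁ ^ 2 ≤ G x ^ 2 := pow_le_pow_left₀ (hGpos x₁ hx₁).le (hGmono self_mem_Ici hx hx) 2
  linarith

theorem deriv_add_mul_nonpos_of_integrableOn_Ici_sq (hκ : 0 < κ)
    (hG1 : ∀ x ∈ Ici a, HasDerivWithinAt G (G' x) (Ici a) x)
    (hG2 : ∀ x ∈ Ici a, HasDerivWithinAt G' (G'' x) (Ici a) x)
    (hconv : ∀ x ∈ Ici a, κ ^ 2 * G x ≤ G'' x) (hG' : ∀ x ∈ Ici a, G' x ≤ 0)
    (hGint : IntegrableOn (fun x => G x ^ 2) (Ici a)) :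
    ∀ x ∈ Ici a, G' x + κ * G x ≤ 0 := by
  intro x₁ hx₁
  by_contra! hpos
  set c := G' x₁ + κ * G x₁
  have hsub : Ici x₁ ⊆ Ici a := Ici_subset_Ici.mpr hx₁
  have hmono : MonotoneOn (fun x => Real.exp (-κ * x) * (G' x + κ * G x)) (Ici a) :=
    monotoneOn_exp_mul_mul (convex_Ici a) (-κ)
      (fun x hx => (hG2 x hx).add ((hG1 x hx).const_mul κ))
      (fun x hx => by linarith [hconv x hx])
  have hlow : ∀ x ∈ Ici x₁, c ≤ κ * G x := by
    intro x (hx : x₁ ≤ x)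
    have he : Real.exp (-κ * x) ≤ Real.exp (-κ * x₁) := Real.exp_le_exp.mpr (by nlinarith)
    have hcx : Real.exp (-κ * x) * c ≤ Real.exp (-κ * x) * (G' x + κ * G x) :=
      (mul_le_mul_of_nonneg_right he hpos.le).trans (hmono hx₁ (hsub hx) hx)
    linarith [le_of_mul_le_mul_left hcx (Real.exp_pos _), hG' x (hsub hx)]
  obtain ⟨x, hx, hlt⟩ :=
    exists_lt_of_integrableOn_Ici (hGint.mono_set hsub) (pow_pos (div_pos hpos hκ) 2)
  have : c / κ ≤ G x := (div_le_iff₀' hκ).mpr (hlow x hx)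
  have : (c / κ) ^ 2 ≤ G x ^ 2 := pow_le_pow_left₀ (div_pos hpos hκ).le this 2
  linarith

theorem le_exp_neg_mul_of_sq_mul_le (hκ : 0 < κ)
    (hG1 : ∀ x ∈ Ici a, HasDerivWithinAt G (G' x) (Ici a) x)
    (hG2 : ∀ x ∈ Ici a, HasDerivWithinAt G' (G'' x) (Ici a) x)
    (hGpos : ∀ x ∈ Ici a, 0 < G x) (hGint : IntegrableOn (fun x => G x ^ 2) (Ici a))
    (hconv : ∀ x ∈ Ici a, κ ^ 2 * G x ≤ G'' x) :
    ∀ x z, a ≤ x → x ≤ z → G z ≤ Real.exp (-κ * (z - x)) * G x := by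
  have hG'' : ∀ x ∈ Ici a, 0 ≤ G'' x := fun x hx =>
    (mul_nonneg (sq_nonneg κ) (hGpos x hx).le).trans (hconv x hx)
  have hG' := deriv_nonpos_of_integrableOn_Ici_sq hG1 hG2 hG'' hGpos hGint
  have hF := deriv_add_mul_nonpos_of_integrableOn_Ici_sq hκ hG1 hG2 hconv hG' hGint
  have hanti : AntitoneOn (fun x => Real.exp (κ * x) * G x) (Ici a) :=
    antitoneOn_exp_mul_mul (convex_Ici a) κ hG1 hF
  intro x z hx hxz
  calc G z = Real.exp (-κ * z) * (Real.exp (κ * z) * G z) := by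
        rw [← mul_assoc, ← Real.exp_add]; simp
    _ ≤ Real.exp (-κ * z) * (Real.exp (κ * x) * G x) :=
        mul_le_mul_of_nonneg_left (hanti hx (hx.trans hxz) hxz) (Real.exp_pos _).le
    _ = Real.exp (-κ * (z - x)) * G x := by
        rw [← mul_assoc, ← Real.exp_add]; ring_nf

end HalfLine

theorem stmt0_general (h δ η x0 E : ℝ) (hh : 0 < h) (hδ : 0 < δ) (hη : 0 < η)
    (V G G' G'' : ℝ → ℝ)
    (hVlb : ∀ x ∈ Ici x0, δ * η / 2 ≤ V x - E)
    (hG1 : ∀ x ∈ Ici x0, HasDerivWithinAt G (G' x) (Ici x0) x)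
    (hG2 : ∀ x ∈ Ici x0, HasDerivWithinAt G' (G'' x) (Ici x0) x)
    (hGpos : ∀ x ∈ Ici x0, 0 < G x)
    (hGint : IntegrableOn (fun x => (G x) ^ 2) (Ici x0))
    (hODE : ∀ x ∈ Ici x0, -h ^ 2 * G'' x + (V x - E) * G x = 0) :
    ∀ x z, x0 ≤ x → x ≤ z →
      G z ≤ Real.exp (-(Real.sqrt (δ * η) / (2 * h)) * (z - x)) * G x := by
  have hδη : 0 < δ * η := mul_pos hδ hη
  refine le_exp_neg_mul_of_sq_mul_le (div_pos (Real.sqrt_pos.mpr hδη) (by positivity))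
    hG1 hG2 hGpos hGint fun x hx => ?_
  rw [div_pow, Real.sq_sqrt hδη.le, div_mul_eq_mul_div, div_le_iff₀ (by positivity)]
  linarith [hODE x hx, mul_le_mul_of_nonneg_right (hVlb x hx) (hGpos x hx).le,
    mul_pos hδη (hGpos x hx)]

theorem stmt0 (h δ η x0 E : ℝ) (hh : 0 < h) (hδ : 0 < δ) (hη : 0 < η)
    (V G G' G'' : ℝ → ℝ)
    (hVlb : ∀ x ∈ Ici x0, δ * η / 2 ≤ V x - E)
    (hG1 : ∀ x ∈ Ici x0, HasDerivWithinAt G (G' x) (Ici x0) x)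
    (hG2 : ∀ x ∈ Ici x0, HasDerivWithinAt G' (G'' x) (Ici x0) x)
    (hG''c : ContinuousOn G'' (Ici x0))
    (hGpos : ∀ x ∈ Ici x0, 0 < G x)
    (hGint : IntegrableOn (fun x => (G x) ^ 2) (Ici x0))
    (hODE : ∀ x ∈ Ici x0, -h ^ 2 * G'' x + (V x - E) * G x = 0) :
    ∀ x z, x0 ≤ x → x ≤ z →
      G z ≤ Real.exp (-(Real.sqrt (δ * η) / (2 * h)) * (z - x)) * G x :=
  stmt0_general h δ η x0 E hh hδ hη V G G' G'' hVlb hG1 hG2 hGpos hGint hODE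
end

section
/- If G is a positive C^2 function on [0,∞) satisfying -h^2 G'' + (V-E)G = 0 with V - E ≥ δη/2 on [x_E + η/2, ∞), and ∫₀^∞ G² = 1, then ∫_{x_E+η}^∞ G(z)² dz ≤ (4/(ηω)) e^{-ωη/4}, where ω = √(δη)/h. -/
/-!
On `[x_E + η/2, ∞)` the equation gives `G'' ≥ c² G` with `c = ω/2`. Since `G > 0` is square
integrable it cannot stay bounded away from `0`; this forces `G' ≤ 0` (as `G'` increases) and
then `G'² - c² G² ≥ 0` (this energy decreases). Hence `G' ≤ -c G`, so `G² e^{ω x}` is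
antitone. Comparing with the mass `∫ G² ≤ 1` of `(x_E + η/2, x_E + 3η/4]` bounds
`G(x_E + η)² ≤ (4/η) e^{-ωη/4}`, and the tail beyond `x_E + η` is at most `G(x_E + η)² / ω`.
-/

open Set MeasureTheory

lemma exists_lt_of_integrableOn_Ioi {f : ℝ → ℝ} {x m : ℝ} (hf : IntegrableOn f (Ioi x))
    (hm : 0 < m) : ∃ y ∈ Ioi x, f y < m := by
  by_contra! hge
  have hconst : IntegrableOn (fun _ => m) (Ioi x) :=
    hf.mono' aestronglyMeasurable_const <| (ae_restrict_iff' measurableSet_Ioi).2 <|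
      Filter.Eventually.of_forall fun y hy => by rw [Real.norm_of_nonneg hm.le]; exact hge y hy
  simp [integrableOn_const_iff, hm.ne'] at hconst

section Monotonicity

variable {f f' : ℝ → ℝ} {a : ℝ}

lemma monotoneOn_Ici_of_hasDerivWithinAt_nonneg
    (hf : ∀ x ∈ Ici a, HasDerivWithinAt f (f' x) (Ici a) x) (hf' : ∀ x ∈ Ioi a, 0 ≤ f' x) :
    MonotoneOn f (Ici a) :=
  monotoneOn_of_hasDerivWithinAt_nonneg (convex_Ici a)
    (fun x hx => (hf x hx).continuousWithinAt)
    (by simpa only [interior_Ici] using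
      fun x hx => (hf x (Ioi_subset_Ici_self hx)).mono Ioi_subset_Ici_self)
    (by simpa only [interior_Ici] using hf')

lemma antitoneOn_Ici_of_hasDerivWithinAt_nonpos
    (hf : ∀ x ∈ Ici a, HasDerivWithinAt f (f' x) (Ici a) x) (hf' : ∀ x ∈ Ioi a, f' x ≤ 0) :
    AntitoneOn f (Ici a) :=
  antitoneOn_of_hasDerivWithinAt_nonpos (convex_Ici a)
    (fun x hx => (hf x hx).continuousWithinAt)
    (by simpa only [interior_Ici] using
      fun x hx => (hf x (Ioi_subset_Ici_self hx)).mono Ioi_subset_Ici_self)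
    (by simpa only [interior_Ici] using hf')

lemma antitoneOn_mul_exp_of_deriv_le (k : ℝ)
    (hf : ∀ x ∈ Ici a, HasDerivWithinAt f (f' x) (Ici a) x) (hf' : ∀ x ∈ Ioi a, f' x ≤ -(k * f x)) :
    AntitoneOn (fun x => f x * Real.exp (k * x)) (Ici a) := by
  refine antitoneOn_Ici_of_hasDerivWithinAt_nonpos
    (fun x hx => (hf x hx).mul ((((hasDerivAt_id x).const_mul k).exp).hasDerivWithinAt)) ?_
  intro x hx
  have := mul_le_mul_of_nonneg_right (hf' x hx) (Real.exp_pos (k * x)).le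
  simp only [id, mul_one] at this ⊢
  linarith

end Monotonicity

section ConvexSolution

variable {G G' G'' : ℝ → ℝ} {a c : ℝ}

lemma deriv_nonpos_of_sq_integrable
    (hG : ∀ x ∈ Ici a, HasDerivWithinAt G (G' x) (Ici a) x)
    (hG' : ∀ x ∈ Ici a, HasDerivWithinAt G' (G'' x) (Ici a) x)
    (hG'' : ∀ x ∈ Ioi a, 0 ≤ G'' x) (hpos : ∀ x ∈ Ici a, 0 < G x)
    (hint : IntegrableOn (fun x => G x ^ 2) (Ioi a)) :
    ∀ x ∈ Ici a, G' x ≤ 0 := by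
  intro x (hx : a ≤ x)
  by_contra! hslope
  have hsub : Ici x ⊆ Ici a := Ici_subset_Ici.2 hx
  have hmono : MonotoneOn G (Ici x) := by
    refine monotoneOn_Ici_of_hasDerivWithinAt_nonneg
      (fun y hy => (hG y (hsub hy)).mono hsub) fun y (hy : x < y) => ?_
    exact hslope.le.trans <| monotoneOn_Ici_of_hasDerivWithinAt_nonneg hG' hG'' hx
      (hsub hy.le) hy.le
  obtain ⟨y, hy, hlt⟩ := exists_lt_of_integrableOn_Ioi
    (hint.mono_set (Ioi_subset_Ioi hx)) (pow_pos (hpos x hx) 2)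
  have := hmono self_mem_Ici (Ioi_subset_Ici_self hy) (le_of_lt hy)
  nlinarith [hpos x hx]

lemma sq_mul_sq_le_deriv_sq
    (hG : ∀ x ∈ Ici a, HasDerivWithinAt G (G' x) (Ici a) x)
    (hG' : ∀ x ∈ Ici a, HasDerivWithinAt G' (G'' x) (Ici a) x)
    (hconv : ∀ x ∈ Ioi a, c ^ 2 * G x ≤ G'' x) (hslope : ∀ x ∈ Ioi a, G' x ≤ 0)
    (hint : IntegrableOn (fun x => G x ^ 2) (Ioi a)) :
    ∀ x ∈ Ici a, c ^ 2 * G x ^ 2 ≤ G' x ^ 2 := by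
  have henergy : AntitoneOn (fun x => G' x ^ 2 - c ^ 2 * G x ^ 2) (Ici a) := by
    refine antitoneOn_Ici_of_hasDerivWithinAt_nonpos
      (fun x hx => ((hG' x hx).pow 2).sub (((hG x hx).pow 2).const_mul _)) fun x hx => ?_
    have := mul_nonneg (neg_nonneg.2 (hslope x hx)) (sub_nonneg.2 (hconv x hx))
    simp only [Nat.cast_ofNat, pow_one, Nat.add_one_sub_one]
    linarith
  intro x hx
  by_contra! hneg
  obtain ⟨y, hy, hlt⟩ := exists_lt_of_integrableOn_Ioi
    ((hint.mono_set (Ioi_subset_Ioi hx)).const_mul (c ^ 2)) (sub_pos.2 hneg)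
  have := henergy hx (mem_Ici.2 (le_trans hx (le_of_lt hy))) (le_of_lt hy)
  nlinarith [sq_nonneg (G' y)]

lemma antitoneOn_sq_mul_exp
    (hG : ∀ x ∈ Ici a, HasDerivWithinAt G (G' x) (Ici a) x)
    (hG' : ∀ x ∈ Ici a, HasDerivWithinAt G' (G'' x) (Ici a) x)
    (hpos : ∀ x ∈ Ici a, 0 < G x) (hc : 0 ≤ c) (hconv : ∀ x ∈ Ici a, c ^ 2 * G x ≤ G'' x)
    (hint : IntegrableOn (fun x => G x ^ 2) (Ioi a)) :
    AntitoneOn (fun x => G x ^ 2 * Real.exp (2 * c * x)) (Ici a) := by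
  have hG'' : ∀ x ∈ Ioi a, 0 ≤ G'' x := fun x hx =>
    (mul_nonneg (sq_nonneg c) (hpos x (Ioi_subset_Ici_self hx)).le).trans
      (hconv x (Ioi_subset_Ici_self hx))
  have hslope := deriv_nonpos_of_sq_integrable hG hG' hG'' hpos hint
  have hsq := sq_mul_sq_le_deriv_sq hG hG' (fun x hx => hconv x (Ioi_subset_Ici_self hx))
    (fun x hx => hslope x (Ioi_subset_Ici_self hx)) hint
  refine antitoneOn_mul_exp_of_deriv_le (2 * c) (fun x hx => (hG x hx).pow 2) fun x hx => ?_
  replace hx := Ioi_subset_Ici_self hx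
  have hGx := hpos x hx
  have hdecay : c * G x ≤ -G' x :=
    (sq_le_sq₀ (by positivity) (neg_nonneg.2 (hslope x hx))).1 <| by
      rw [neg_sq, mul_pow]; exact hsq x hx
  simp only [Nat.cast_ofNat, pow_one, Nat.add_one_sub_one]
  nlinarith

end ConvexSolution

section ExponentialDecay

variable {F : ℝ → ℝ} {a b k : ℝ}

lemma setIntegral_Ioi_le_of_antitoneOn_mul_exp (hk : 0 < k)
    (hF : AntitoneOn (fun x => F x * Real.exp (k * x)) (Ici a)) (hb : a ≤ b)
    (hint : IntegrableOn F (Ioi b)) : ∫ x in Ioi b, F x ≤ F b / k := by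
  have hle : ∀ x ∈ Ioi b, F x ≤ F b * Real.exp (k * b) * Real.exp (-k * x) := fun x hx => by
    rw [neg_mul, Real.exp_neg, ← div_eq_mul_inv, le_div_iff₀ (Real.exp_pos _)]
    exact hF hb (mem_Ici.2 (le_trans hb (le_of_lt hx))) (le_of_lt hx)
  calc ∫ x in Ioi b, F x
      ≤ ∫ x in Ioi b, F b * Real.exp (k * b) * Real.exp (-k * x) :=
        setIntegral_mono_on hint ((integrableOn_exp_mul_Ioi (by linarith) b).const_mul _)
          measurableSet_Ioi hle
    _ = F b / k := by
        rw [integral_const_mul, integral_exp_mul_Ioi (by linarith), neg_mul, Real.exp_neg]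
        field_simp

lemma mul_exp_mul_le_setIntegral_Ioc {l : ℝ} (hk : 0 ≤ k) (hl : 0 ≤ l) (hb : a + l ≤ b)
    (hF : AntitoneOn (fun x => F x * Real.exp (k * x)) (Ici a)) (hFb : 0 ≤ F b)
    (hint : IntegrableOn F (Ioc a (a + l))) :
    F b * Real.exp (k * (b - (a + l))) * l ≤ ∫ x in Ioc a (a + l), F x := by
  have hle : ∀ x ∈ Ioc a (a + l), F b * Real.exp (k * (b - (a + l))) ≤ F x := by
    rintro x ⟨hax, hxl⟩
    calc F b * Real.exp (k * (b - (a + l))) ≤ F b * Real.exp (k * (b - x)) := by gcongr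
      _ = F b * Real.exp (k * b) / Real.exp (k * x) := by
          rw [mul_sub, Real.exp_sub, mul_div_assoc]
      _ ≤ F x := by
          rw [div_le_iff₀ (Real.exp_pos _)]
          exact hF (mem_Ici.2 hax.le) (mem_Ici.2 (by linarith)) (by linarith)
  have := setIntegral_ge_of_const_le_real measurableSet_Ioc measure_Ioc_lt_top.ne hle hint
  rwa [Real.volume_real_Ioc_of_le (by linarith), add_sub_cancel_left] at this

end ExponentialDecay

theorem stmt2_general (h δ η xE E : ℝ) (hh : 0 < h) (hδ : 0 < δ) (hη : 0 < η) (hxE : 0 ≤ xE)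
    (V G G' G'' : ℝ → ℝ)
    (hVlb : ∀ x ∈ Ici (xE + η / 2), δ * η / 2 ≤ V x - E)
    (hG1 : ∀ x ∈ Ici (xE + η / 2), HasDerivWithinAt G (G' x) (Ici (xE + η / 2)) x)
    (hG2 : ∀ x ∈ Ici (xE + η / 2), HasDerivWithinAt G' (G'' x) (Ici (xE + η / 2)) x)
    (hGpos : ∀ x ∈ Ici (xE + η / 2), 0 < G x)
    (hODE : ∀ x ∈ Ici (xE + η / 2), -h ^ 2 * G'' x + (V x - E) * G x = 0)
    (hGint : IntegrableOn (fun x => (G x) ^ 2) (Ioi 0))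
    (hnorm : ∫ x in Ioi (0 : ℝ), (G x) ^ 2 = 1) :
    ∫ z in Ioi (xE + η), (G z) ^ 2 ≤
      4 / (η * (Real.sqrt (δ * η) / h)) * Real.exp (-(Real.sqrt (δ * η) / h) * η / 4) := by
  set ω := Real.sqrt (δ * η) / h
  have hω : 0 < ω := div_pos (Real.sqrt_pos.2 (by positivity)) hh
  have hωh : (ω / 2) ^ 2 * h ^ 2 = δ * η / 4 := by
    rw [div_pow, div_pow, Real.sq_sqrt (by positivity)]
    field_simp
    norm_num
  have hconv : ∀ x ∈ Ici (xE + η / 2), (ω / 2) ^ 2 * G x ≤ G'' x := fun x hx => by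
    refine le_of_mul_le_mul_right ?_ (by positivity : 0 < h ^ 2)
    rw [mul_right_comm, hωh]
    nlinarith [mul_le_mul_of_nonneg_right (hVlb x hx) (hGpos x hx).le, hODE x hx,
      mul_pos (mul_pos hδ hη) (hGpos x hx)]
  have hsub : ∀ {s}, s ⊆ Ioi (xE + η / 2) → s ⊆ Ioi 0 :=
    fun hs => hs.trans (Ioi_subset_Ioi (by positivity))
  have hanti := antitoneOn_sq_mul_exp hG1 hG2 hGpos (by positivity) hconv
    (hGint.mono_set (hsub subset_rfl))
  rw [show 2 * (ω / 2) = ω by ring] at hanti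
  have hmass : G (xE + η) ^ 2 * Real.exp (ω * (η / 4)) * (η / 4) ≤ 1 := by
    have := mul_exp_mul_le_setIntegral_Ioc (b := xE + η) (l := η / 4) hω.le (by positivity)
      (by linarith) hanti (sq_nonneg _) (hGint.mono_set (hsub Ioc_subset_Ioi_self))
    rw [show xE + η - (xE + η / 2 + η / 4) = η / 4 by ring] at this
    exact hnorm ▸ this.trans (setIntegral_mono_set hGint (ae_of_all _ fun x => sq_nonneg (G x))
      (hsub Ioc_subset_Ioi_self).eventuallyLE)
  calc ∫ z in Ioi (xE + η), G z ^ 2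
      ≤ G (xE + η) ^ 2 / ω := setIntegral_Ioi_le_of_antitoneOn_mul_exp hω hanti (by linarith)
        (hGint.mono_set (hsub (Ioi_subset_Ioi (by linarith))))
    _ = G (xE + η) ^ 2 * Real.exp (ω * (η / 4)) * (η / 4) *
          (4 / (η * ω) * Real.exp (-ω * η / 4)) := by
        rw [show -ω * η / 4 = -(ω * (η / 4)) by ring, Real.exp_neg]
        field_simp
    _ ≤ 4 / (η * ω) * Real.exp (-ω * η / 4) := mul_le_of_le_one_left (by positivity) hmass

theorem stmt2 (h δ η xE E : ℝ) (hh : 0 < h) (hδ : 0 < δ) (hη : 0 < η) (hxE : 0 ≤ xE)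
    (V G G' G'' : ℝ → ℝ)
    (hVlb : ∀ x ∈ Ici (xE + η / 2), δ * η / 2 ≤ V x - E)
    (hG1 : ∀ x ∈ Ici (xE + η / 2), HasDerivWithinAt G (G' x) (Ici (xE + η / 2)) x)
    (hG2 : ∀ x ∈ Ici (xE + η / 2), HasDerivWithinAt G' (G'' x) (Ici (xE + η / 2)) x)
    (hG''c : ContinuousOn G'' (Ici (xE + η / 2)))
    (hGpos : ∀ x ∈ Ici (xE + η / 2), 0 < G x)
    (hODE : ∀ x ∈ Ici (xE + η / 2), -h ^ 2 * G'' x + (V x - E) * G x = 0)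
    (hGint : IntegrableOn (fun x => (G x) ^ 2) (Ioi 0))
    (hnorm : ∫ x in Ioi (0 : ℝ), (G x) ^ 2 = 1) :
    ∫ z in Ioi (xE + η), (G z) ^ 2 ≤
      4 / (η * (Real.sqrt (δ * η) / h)) * Real.exp (-(Real.sqrt (δ * η) / h) * η / 4) :=
  stmt2_general h δ η xE E hh hδ hη hxE V G G' G'' hVlb hG1 hG2 hGpos hODE hGint hnorm
end

section
/- With Z_h(E) = |Z_h(E)|e^{iθ_h(E)} as above and G L²-normalized, one has dE = h|Z_h(E)|² dθ_h, i.e. θ̇_h(E) = 1/(h|Z_h(E)|²). Consequently, if |Z_h(E)| ≥ c > 0 on an interval containing two consecutive Dirichlet (or Neumann) eigenvalues E < Ẽ, then since ∫_E^{Ẽ} θ̇_h = π, the spacing satisfies Ẽ - E ≥ π c² h. -/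
/-! Since `θ̇ = 1 / (h |Z|²) ≤ 1 / (h c²)` on `[E, Ẽ]`, the mean value inequality gives
`π = θ(Ẽ) - θ(E) ≤ (Ẽ - E) / (h c²)`. -/

open Set

theorem sub_le_mul_sub_of_hasDerivAt_le {f f' : ℝ → ℝ} {a b C : ℝ} (hab : a ≤ b)
    (hf : ∀ t ∈ Icc a b, HasDerivAt f (f' t) t) (hf'C : ∀ t ∈ Icc a b, f' t ≤ C) :
    f b - f a ≤ C * (b - a) := by
  have hcont : ContinuousOn f (Icc a b) := fun t ht => (hf t ht).continuousAt.continuousWithinAt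
  refine (convex_Icc a b).image_sub_le_mul_sub_of_deriv_le hcont
    (fun t ht => (hf t (interior_subset ht)).differentiableAt.differentiableWithinAt)
    (fun t ht => ?_) a (left_mem_Icc.2 hab) b (right_mem_Icc.2 hab) hab
  rw [(hf t (interior_subset ht)).deriv]
  exact hf'C t (interior_subset ht)

theorem one_div_mul_sq_le_of_le {h c r : ℝ} (hh : 0 < h) (hc : 0 < c) (hcr : c ≤ r) :
    1 / (h * r ^ 2) ≤ 1 / (h * c ^ 2) := by
  gcongr

theorem stmt7_general (h c E Et : ℝ) (hh : 0 < h) (hc : 0 < c) (hEE : E < Et)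
    (Z : ℝ → ℂ) (θ : ℝ → ℝ)
    (hθ : ∀ t ∈ Icc E Et, HasDerivAt θ (1 / (h * ‖Z t‖ ^ 2)) t)
    (hlb : ∀ t ∈ Icc E Et, c ≤ ‖Z t‖)
    (hwind : θ Et - θ E = Real.pi) :
    Real.pi * c ^ 2 * h ≤ Et - E := by
  have hwind_le : Real.pi ≤ 1 / (h * c ^ 2) * (Et - E) :=
    hwind ▸ sub_le_mul_sub_of_hasDerivAt_le hEE.le hθ
      fun t ht => one_div_mul_sq_le_of_le hh hc (hlb t ht)
  rw [one_div_mul_eq_div, le_div_iff₀ (by positivity)] at hwind_le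
  linarith

theorem stmt7 (h c E Et : ℝ) (hh : 0 < h) (hc : 0 < c) (hEE : E < Et)
    (Z : ℝ → ℂ) (hZc : Continuous Z) (θ : ℝ → ℝ)
    (hθ : ∀ t ∈ Icc E Et, HasDerivAt θ (1 / (h * ‖Z t‖ ^ 2)) t)
    (hlb : ∀ t ∈ Icc E Et, c ≤ ‖Z t‖)
    (hwind : θ Et - θ E = Real.pi) :
    Real.pi * c ^ 2 * h ≤ Et - E :=
  stmt7_general h c E Et hh hc hEE Z θ hθ hlb hwind
end

section
/- Let u be a C² solution on (0,b] of -h²u'' + (V - E)u = 0 with E - V > 0 and V C² on [0,b]. With φ_± and r = -a''/a as above, there exist constants α_± ∈ ℂ such that for all x ∈ (0,b]: u(x) = α_+φ_+(x) + α_-φ_-(x) - (h/2i)∫_x^b r(y)u(y)[φ_-(y)φ_+(x) - φ_+(y)φ_-(x)] dy. -/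
open Set

noncomputable def wkbA (E : ℝ) (V : ℝ → ℝ) (x : ℝ) : ℝ := (E - V x) ^ (-(1/4 : ℝ))

noncomputable def wkbS (E : ℝ) (V : ℝ → ℝ) (x : ℝ) : ℝ :=
  ∫ y in (0 : ℝ)..x, Real.sqrt (E - V y)

noncomputable def wkbPhi (h E : ℝ) (V : ℝ → ℝ) (s : ℝ) (x : ℝ) : ℂ :=
  (wkbA E V x : ℂ) * Complex.exp (s * Complex.I * (wkbS E V x) / h)

noncomputable def wkbR (E : ℝ) (V : ℝ → ℝ) (x : ℝ) : ℝ :=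
  -(deriv (deriv (wkbA E V)) x) / wkbA E V x

/-!
The WKB functions `φ± = a e^{± i S / h}` solve `φ'' = q φ` with `q = (V - E) / h² - r`: writing
`φ = a e^{iθ}`, the coefficient of `i` in `φ''` is `2 a' θ' + a θ''`, which vanishes by the
transport equation `(a² S')' = 0` (indeed `a² S' = 1`), and the real part is `a'' - a θ'² = q a`.
Their Wronskian is `-2i a² S' / h = -2i / h`. The original equation reads `u'' = q u + r u`, so
variation of constants with the kernel `(φ₋(y) φ₊(x) - φ₊(y) φ₋(x)) / W` produces a particular
solution, and `u` minus it is a combination of `φ±`, because its Wronskians with `φ±` are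
constant.
-/

open Complex Filter Topology

section VariationOfConstants

variable {𝕜 : Type*} [RCLike 𝕜] {s U : Set ℝ} {q g y₁ y₁' y₂ y₂' : ℝ → 𝕜} {W : 𝕜}

theorem Set.OrdConnected.eq_of_forall_hasDerivAt_zero {F : Type*} [NormedAddCommGroup F]
    [NormedSpace ℝ F] (hs : s.OrdConnected) {f : ℝ → F} (hf : ∀ t ∈ s, HasDerivAt f 0 t)
    {x y : ℝ} (hx : x ∈ s) (hy : y ∈ s) : f x = f y := by
  have := hs.convex.norm_image_sub_le_of_norm_hasDerivWithin_le
    (fun t ht => (hf t ht).hasDerivWithinAt) (fun _ _ => norm_zero.le) hy hx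
  simpa [sub_eq_zero] using this

theorem hasDerivAt_wronskian_zero {y y' z z' : ℝ → 𝕜} {t : ℝ} (hy : HasDerivAt y (y' t) t)
    (hy' : HasDerivAt y' (q t * y t) t) (hz : HasDerivAt z (z' t) t)
    (hz' : HasDerivAt z' (q t * z t) t) :
    HasDerivAt (fun t => y t * z' t - y' t * z t) 0 t :=
  ((hy.mul hz').sub (hy'.mul hz)).congr_deriv (by ring)

theorem exists_eq_linear_combination_of_wronskian (hs : s.OrdConnected)
    (hy₁ : ∀ t ∈ s, HasDerivAt y₁ (y₁' t) t) (hy₁' : ∀ t ∈ s, HasDerivAt y₁' (q t * y₁ t) t)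
    (hy₂ : ∀ t ∈ s, HasDerivAt y₂ (y₂' t) t) (hy₂' : ∀ t ∈ s, HasDerivAt y₂' (q t * y₂ t) t)
    (hW : ∀ t ∈ s, y₁ t * y₂' t - y₁' t * y₂ t = W) (hW0 : W ≠ 0) {w w' : ℝ → 𝕜}
    (hw : ∀ t ∈ s, HasDerivAt w (w' t) t) (hw' : ∀ t ∈ s, HasDerivAt w' (q t * w t) t) :
    ∃ α β : 𝕜, ∀ x ∈ s, w x = α * y₁ x + β * y₂ x := by
  rcases s.eq_empty_or_nonempty with rfl | ⟨x₀, hx₀⟩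
  · exact ⟨0, 0, fun x hx => hx.elim⟩
  refine ⟨(w x₀ * y₂' x₀ - w' x₀ * y₂ x₀) / W, (y₁ x₀ * w' x₀ - y₁' x₀ * w x₀) / W,
    fun x hx => ?_⟩
  have hα := hs.eq_of_forall_hasDerivAt_zero
    (fun t ht => hasDerivAt_wronskian_zero (hw t ht) (hw' t ht) (hy₂ t ht) (hy₂' t ht)) hx hx₀
  have hβ := hs.eq_of_forall_hasDerivAt_zero
    (fun t ht => hasDerivAt_wronskian_zero (hy₁ t ht) (hy₁' t ht) (hw t ht) (hw' t ht)) hx hx₀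
  rw [← hα, ← hβ]
  linear_combination (-(w x) * W⁻¹) * hW x hx - w x * mul_inv_cancel₀ hW0

theorem hasDerivAt_integral_left_of_continuousOn {F : Type*} [NormedAddCommGroup F]
    [NormedSpace ℝ F] [CompleteSpace F] {f : ℝ → F} (hU : IsOpen U) (hf : ContinuousOn f U)
    {a b : ℝ} (hab : uIcc a b ⊆ U) : HasDerivAt (fun t => ∫ x in t..b, f x) (-f a) a :=
  have ha : a ∈ U := hab left_mem_uIcc
  intervalIntegral.integral_hasDerivAt_left (hf.mono hab).intervalIntegrable
    (hf.stronglyMeasurableAtFilter hU a ha) (hf.continuousAt (hU.mem_nhds ha))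

theorem exists_eq_add_integral_of_wronskian (hU : IsOpen U) (hsU : s ⊆ U) (hs : s.OrdConnected)
    {b : ℝ} (hb : b ∈ s)
    (hy₁ : ∀ t ∈ U, HasDerivAt y₁ (y₁' t) t) (hy₁' : ∀ t ∈ s, HasDerivAt y₁' (q t * y₁ t) t)
    (hy₂ : ∀ t ∈ U, HasDerivAt y₂ (y₂' t) t) (hy₂' : ∀ t ∈ s, HasDerivAt y₂' (q t * y₂ t) t)
    (hW : ∀ t ∈ s, y₁ t * y₂' t - y₁' t * y₂ t = W) (hW0 : W ≠ 0) (hg : ContinuousOn g U)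
    {u u' : ℝ → 𝕜} (hu : ∀ t ∈ s, HasDerivAt u (u' t) t)
    (hu' : ∀ t ∈ s, HasDerivAt u' (q t * u t + g t) t) :
    ∃ α β : 𝕜, ∀ x ∈ s, u x = α * y₁ x + β * y₂ x
      + W⁻¹ * ∫ y in x..b, g y * (y₂ y * y₁ x - y₁ y * y₂ x) := by
  have hgy₁ : ContinuousOn (fun y => g y * y₁ y) U :=
    hg.mul fun t ht => (hy₁ t ht).continuousAt.continuousWithinAt
  have hgy₂ : ContinuousOn (fun y => g y * y₂ y) U :=
    hg.mul fun t ht => (hy₂ t ht).continuousAt.continuousWithinAt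
  have hIcc : ∀ x ∈ s, uIcc x b ⊆ U := fun x hx => (hs.uIcc_subset hx hb).trans hsU
  set J₁ : ℝ → 𝕜 := fun x => ∫ y in x..b, g y * y₁ y
  set J₂ : ℝ → 𝕜 := fun x => ∫ y in x..b, g y * y₂ y
  have hJ₁ : ∀ t ∈ s, HasDerivAt J₁ (-(g t * y₁ t)) t := fun t ht =>
    hasDerivAt_integral_left_of_continuousOn hU hgy₁ (hIcc t ht)
  have hJ₂ : ∀ t ∈ s, HasDerivAt J₂ (-(g t * y₂ t)) t := fun t ht =>
    hasDerivAt_integral_left_of_continuousOn hU hgy₂ (hIcc t ht)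
  -- `u` minus the particular solution `W⁻¹ (y₁ J₂ - y₂ J₁)` solves the homogeneous equation
  obtain ⟨α, β, hαβ⟩ := exists_eq_linear_combination_of_wronskian hs
    (fun t ht => hy₁ t (hsU ht)) hy₁' (fun t ht => hy₂ t (hsU ht)) hy₂' hW hW0
    (w := fun x => u x - W⁻¹ * (y₁ x * J₂ x - y₂ x * J₁ x))
    (w' := fun x => u' x - W⁻¹ * (y₁' x * J₂ x - y₂' x * J₁ x))
    (fun t ht => ((hu t ht).sub ((((hy₁ t (hsU ht)).mul (hJ₂ t ht)).sub
        ((hy₂ t (hsU ht)).mul (hJ₁ t ht))).const_mul W⁻¹)).congr_deriv (by ring))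
    (fun t ht => ((hu' t ht).sub ((((hy₁' t ht).mul (hJ₂ t ht)).sub
        ((hy₂' t ht).mul (hJ₁ t ht))).const_mul W⁻¹)).congr_deriv
      (by linear_combination -(g t * W⁻¹) * hW t ht - g t * mul_inv_cancel₀ hW0))
  refine ⟨α, β, fun x hx => ?_⟩
  have hsplit :
      ∫ y in x..b, g y * (y₂ y * y₁ x - y₁ y * y₂ x) = J₂ x * y₁ x - J₁ x * y₂ x := by
    rw [← intervalIntegral.integral_mul_const, ← intervalIntegral.integral_mul_const,
      ← intervalIntegral.integral_sub ((hgy₂.mono (hIcc x hx)).intervalIntegrable.mul_const _)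
        ((hgy₁.mono (hIcc x hx)).intervalIntegrable.mul_const _)]
    congr 1 with y
    ring
  rw [hsplit]
  linear_combination hαβ x hx

end VariationOfConstants

section AmplitudePhase

variable {a θ a₁ θ₁ : ℝ → ℝ} {a' θ' a₂ θ₂ x : ℝ}

theorem HasDerivAt.ofReal_mul_exp_mul_I (ha : HasDerivAt a a' x) (hθ : HasDerivAt θ θ' x) :
    HasDerivAt (fun y => (a y : ℂ) * Complex.exp ((θ y : ℂ) * I))
      (((a' : ℂ) + a x * (θ' : ℂ) * I) * Complex.exp ((θ x : ℂ) * I)) x :=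
  (ha.ofReal_comp.mul (hθ.ofReal_comp.mul_const I).cexp).congr_deriv (by ring)

theorem HasDerivAt.ofReal_add_mul_I_mul_exp_mul_I (ha : HasDerivAt a (a₁ x) x)
    (ha₁ : HasDerivAt a₁ a₂ x) (hθ : HasDerivAt θ (θ₁ x) x) (hθ₁ : HasDerivAt θ₁ θ₂ x) :
    HasDerivAt (fun y => ((a₁ y : ℂ) + a y * (θ₁ y : ℂ) * I) * Complex.exp ((θ y : ℂ) * I))
      (((a₂ - a x * θ₁ x ^ 2 : ℝ) + ((2 * a₁ x * θ₁ x + a x * θ₂ : ℝ) : ℂ) * I)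
        * Complex.exp ((θ x : ℂ) * I)) x :=
  ((ha₁.ofReal_comp.add ((ha.ofReal_comp.mul hθ₁.ofReal_comp).mul_const I)).mul
    (hθ.ofReal_comp.mul_const I).cexp).congr_deriv
    (by
      simp only [Pi.add_apply, Pi.mul_apply]
      push_cast
      linear_combination (a x * θ₁ x ^ 2 * Complex.exp ((θ x : ℂ) * I)) * I_sq)

end AmplitudePhase

section WKB

variable {h E s x : ℝ} {V : ℝ → ℝ}

theorem isOpen_setOf_sub_pos (hV : Continuous V) : IsOpen {x | 0 < E - V x} :=
  isOpen_lt continuous_const (continuous_const.sub hV)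

theorem wkbA_pos (hx : 0 < E - V x) : 0 < wkbA E V x :=
  Real.rpow_pos_of_pos hx _

theorem wkbA_sq_mul_sqrt (hx : 0 < E - V x) : wkbA E V x ^ 2 * √(E - V x) = 1 := by
  rw [wkbA, Real.sqrt_eq_rpow, ← Real.rpow_natCast, ← Real.rpow_mul hx.le, ← Real.rpow_add hx]
  norm_num

theorem contDiffAt_wkbA (hV : ContDiff ℝ 2 V) (hx : 0 < E - V x) :
    ContDiffAt ℝ 2 (wkbA E V) x :=
  (contDiffAt_const.sub hV.contDiffAt).rpow_const_of_ne hx.ne'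

theorem contDiffAt_sqrt_sub (hV : ContDiff ℝ 2 V) (hx : 0 < E - V x) :
    ContDiffAt ℝ 2 (fun y => √(E - V y)) x :=
  (contDiffAt_const.sub hV.contDiffAt).sqrt hx.ne'

theorem contDiffOn_wkbA (hV : ContDiff ℝ 2 V) : ContDiffOn ℝ 2 (wkbA E V) {x | 0 < E - V x} :=
  fun _ hx => (contDiffAt_wkbA hV hx).contDiffWithinAt

theorem hasDerivAt_wkbA (hV : ContDiff ℝ 2 V) (hx : 0 < E - V x) :
    HasDerivAt (wkbA E V) (deriv (wkbA E V) x) x :=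
  ((contDiffAt_wkbA hV hx).differentiableAt two_ne_zero).hasDerivAt

theorem hasDerivAt_sqrt_sub (hV : ContDiff ℝ 2 V) (hx : 0 < E - V x) :
    HasDerivAt (fun y => √(E - V y)) (deriv (fun y => √(E - V y)) x) x :=
  ((contDiffAt_sqrt_sub hV hx).differentiableAt two_ne_zero).hasDerivAt

theorem hasDerivAt_deriv_wkbA (hV : ContDiff ℝ 2 V) (hx : 0 < E - V x) :
    HasDerivAt (deriv (wkbA E V)) (deriv (deriv (wkbA E V)) x) x :=
  (((contDiffOn_wkbA hV).deriv_of_isOpen (isOpen_setOf_sub_pos hV.continuous)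
    (m := 1) le_rfl).differentiableOn one_ne_zero |>.differentiableAt
    ((isOpen_setOf_sub_pos hV.continuous).mem_nhds hx)).hasDerivAt

theorem continuousOn_wkbR (hV : ContDiff ℝ 2 V) :
    ContinuousOn (wkbR E V) {x | 0 < E - V x} := by
  have hO := isOpen_setOf_sub_pos (E := E) hV.continuous
  have ha₂ := (((contDiffOn_wkbA hV).deriv_of_isOpen hO (m := 1) le_rfl).deriv_of_isOpen hO
    (m := 0) le_rfl).continuousOn
  exact ha₂.neg.div (contDiffOn_wkbA hV).continuousOn fun x hx => (wkbA_pos hx).ne'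

theorem hasDerivAt_wkbS (hV : Continuous V) (x : ℝ) :
    HasDerivAt (wkbS E V) (√(E - V x)) x :=
  have hc : Continuous fun y => √(E - V y) := (continuous_const.sub hV).sqrt
  intervalIntegral.integral_hasDerivAt_right (hc.intervalIntegrable 0 x)
    (hc.stronglyMeasurableAtFilter _ _) hc.continuousAt

-- the transport equation, obtained by differentiating `a² √(E - V) = 1`
theorem two_mul_deriv_wkbA_mul_sqrt_add (hV : ContDiff ℝ 2 V) (hx : 0 < E - V x) :
    2 * deriv (wkbA E V) x * √(E - V x) + wkbA E V x * deriv (fun y => √(E - V y)) x = 0 := by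
  have hone : HasDerivAt (fun y => wkbA E V y ^ 2 * √(E - V y)) 0 x :=
    (hasDerivAt_const x 1).congr_of_eventuallyEq <|
      eventually_of_mem ((isOpen_setOf_sub_pos hV.continuous).mem_nhds hx)
        fun y hy => wkbA_sq_mul_sqrt hy
  have hprod := (((hasDerivAt_wkbA hV hx).pow 2).mul (hasDerivAt_sqrt_sub hV hx)).unique hone
  simp only [Pi.pow_apply] at hprod
  push_cast at hprod
  refine mul_left_cancel₀ (wkbA_pos hx).ne' ?_
  linear_combination hprod

theorem wkbPhi_eq (h E : ℝ) (V : ℝ → ℝ) (s : ℝ) :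
    wkbPhi h E V s = fun x => (wkbA E V x : ℂ) * exp ((s * wkbS E V x / h : ℝ) * I) := by
  funext x
  simp only [wkbPhi]
  push_cast
  ring_nf

theorem hasDerivAt_wkbPhi (hV : ContDiff ℝ 2 V) (hx : 0 < E - V x) :
    HasDerivAt (wkbPhi h E V s)
      ((deriv (wkbA E V) x + wkbA E V x * (s * √(E - V x) / h : ℝ) * I)
        * exp ((s * wkbS E V x / h : ℝ) * I)) x := by
  rw [wkbPhi_eq]
  exact (hasDerivAt_wkbA hV hx).ofReal_mul_exp_mul_I
    (((hasDerivAt_wkbS hV.continuous x).const_mul s).div_const h)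

theorem hasDerivAt_deriv_wkbPhi (hV : ContDiff ℝ 2 V) (hx : 0 < E - V x) (hs : s ^ 2 = 1) :
    HasDerivAt (deriv (wkbPhi h E V s))
      (((V x - E) / h ^ 2 - wkbR E V x : ℝ) * wkbPhi h E V s x) x := by
  have hO := isOpen_setOf_sub_pos (E := E) hV.continuous
  have h2 := (hasDerivAt_wkbA hV hx).ofReal_add_mul_I_mul_exp_mul_I (hasDerivAt_deriv_wkbA hV hx)
    (((hasDerivAt_wkbS hV.continuous x).const_mul s).div_const h)
    (((hasDerivAt_sqrt_sub hV hx).const_mul s).div_const h)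
  have hderiv : deriv (wkbPhi h E V s) =ᶠ[𝓝 x] fun y => (((deriv (wkbA E V) y : ℝ) : ℂ)
      + wkbA E V y * (s * √(E - V y) / h : ℝ) * I) * exp ((s * wkbS E V y / h : ℝ) * I) :=
    eventually_of_mem (hO.mem_nhds hx) fun y hy => (hasDerivAt_wkbPhi hV hy).deriv
  refine (h2.congr_of_eventuallyEq hderiv).congr_deriv ?_
  have htransport := two_mul_deriv_wkbA_mul_sqrt_add hV hx
  have hr : wkbR E V x * wkbA E V x = -deriv (deriv (wkbA E V)) x := by
    rw [wkbR, neg_div, neg_mul, div_mul_cancel₀ _ (wkbA_pos hx).ne']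
  have hρ2 := Real.sq_sqrt hx.le
  have hre : deriv (deriv (wkbA E V)) x - wkbA E V x * (s * √(E - V x) / h) ^ 2
      = ((V x - E) / h ^ 2 - wkbR E V x) * wkbA E V x := by
    linear_combination hr - (wkbA E V x * s ^ 2 / h ^ 2) * hρ2
      - (wkbA E V x * (E - V x) / h ^ 2) * hs
  have htr : 2 * deriv (wkbA E V) x * (s * √(E - V x) / h)
      + wkbA E V x * (s * deriv (fun y => √(E - V y)) x / h) = 0 := by
    linear_combination (s / h) * htransport
  rw [hre, htr, wkbPhi_eq]
  push_cast
  ring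

theorem wronskian_wkbPhi (hV : ContDiff ℝ 2 V) (hx : 0 < E - V x) :
    wkbPhi h E V 1 x * deriv (wkbPhi h E V (-1)) x
      - deriv (wkbPhi h E V 1) x * wkbPhi h E V (-1) x = -(2 * I) / h := by
  rw [(hasDerivAt_wkbPhi hV hx).deriv, (hasDerivAt_wkbPhi hV hx).deriv, wkbPhi_eq h E V 1,
    wkbPhi_eq h E V (-1)]
  beta_reduce
  have hexp :
      exp ((1 * wkbS E V x / h : ℝ) * I) * exp ((-1 * wkbS E V x / h : ℝ) * I) = 1 := by
    rw [← exp_add, ← exp_zero]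
    push_cast
    ring_nf
  have hsq : ((wkbA E V x : ℂ)) ^ 2 * (√(E - V x) : ℂ) = 1 := by
    exact_mod_cast wkbA_sq_mul_sqrt hx
  have hplus : ((1 * √(E - V x) / h : ℝ) : ℂ) = (√(E - V x) : ℂ) / h := by
    push_cast; ring
  have hminus : ((-1 * √(E - V x) / h : ℝ) : ℂ) = -(√(E - V x) : ℂ) / h := by
    push_cast; ring
  rw [hplus, hminus]
  linear_combination (-(2 * I) * (wkbA E V x : ℂ) ^ 2 * (√(E - V x) : ℂ) / h) * hexp
    + (-(2 * I) / h) * hsq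

end WKB

theorem stmt13 (h b E : ℝ) (hh : 0 < h) (hb : 0 < b)
    (V : ℝ → ℝ) (hV : ContDiff ℝ 2 V) (hpos : ∀ x ∈ Icc 0 b, 0 < E - V x)
    (u : ℝ → ℂ) (hu : ContDiff ℝ 2 u)
    (hODE : ∀ x ∈ Ioc 0 b,
      -(h : ℂ) ^ 2 * deriv (deriv u) x + ((V x - E : ℝ) : ℂ) * u x = 0) :
    ∃ αp αm : ℂ, ∀ x ∈ Ioc 0 b,
      u x = αp * wkbPhi h E V 1 x + αm * wkbPhi h E V (-1) x
        - (h / (2 * Complex.I)) * ∫ y in x..b, (wkbR E V y : ℂ) * u y *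
            (wkbPhi h E V (-1) y * wkbPhi h E V 1 x
              - wkbPhi h E V 1 y * wkbPhi h E V (-1) x) := by
  have hO := isOpen_setOf_sub_pos (E := E) hV.continuous
  have hsO : Ioc 0 b ⊆ {x | 0 < E - V x} := fun x hx => hpos x (Ioc_subset_Icc_self hx)
  have hphi (s : ℝ) (t : ℝ) (ht : 0 < E - V t) :
      HasDerivAt (wkbPhi h E V s) (deriv (wkbPhi h E V s) t) t :=
    (hasDerivAt_wkbPhi hV ht).differentiableAt.hasDerivAt
  have hh' : (h : ℂ) ≠ 0 := by exact_mod_cast hh.ne'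
  have hu₂ (t : ℝ) (ht : t ∈ Ioc 0 b) : HasDerivAt (deriv u)
      (((V t - E) / h ^ 2 - wkbR E V t : ℝ) * u t + wkbR E V t * u t) t := by
    refine (hu.differentiable_deriv_two t).hasDerivAt.congr_deriv ?_
    push_cast at hODE ⊢
    field_simp
    linear_combination -hODE t ht
  have hW0 : -(2 * I) / (h : ℂ) ≠ 0 := by simpa using hh'
  obtain ⟨α, β, hαβ⟩ := exists_eq_add_integral_of_wronskian hO hsO ordConnected_Ioc
    (right_mem_Ioc.2 hb)
    (hphi 1) (fun t ht => hasDerivAt_deriv_wkbPhi hV (hsO ht) (by norm_num))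
    (hphi (-1)) (fun t ht => hasDerivAt_deriv_wkbPhi hV (hsO ht) (by norm_num))
    (fun t ht => wronskian_wkbPhi hV (hsO ht)) hW0
    ((continuous_ofReal.comp_continuousOn (continuousOn_wkbR hV)).mul hu.continuous.continuousOn)
    (fun t _ => (hu.differentiable two_ne_zero t).hasDerivAt) hu₂
  refine ⟨α, β, fun x hx => ?_⟩
  rw [hαβ x hx]
  simp only [Pi.mul_apply, Function.comp_apply]
  rw [show (-(2 * I) / (h : ℂ))⁻¹ = -(h / (2 * I)) by field_simp]
  ring
end
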